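/- arXiv:1509.01011 — 6 statements merged into one kernel-verified Lean document; each statement's English description precedes it below -/
import Mathlib

section
/- Let C be a compact convex subset of a finite-dimensional real vector space M and let g₁, g₂ : C → ℝ be continuous concave functions. Let C_max be the set of points where g₁ + g₂ attains its maximum on C. Then there exists u₀ in the dual space N such that for all x₁, x₂ ∈ C_max, g₁(x₂) - g₁(x₁) = ⟨u₀, x₂ - x₁⟩ and g₂(x₂) - g₂(x₁) = -⟨u₀, x₂ - x₁⟩ (i.e., the restrictions of g₁ and g₂ to C_max are affine with opposite slopes). -/
/-!
On the set `S` of maximizers of `g₁ + g₂` (convex, as a superlevel set of a concave function)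
the sum is constant, so `g₁ = const - g₂` is convex as well as concave there: `g₁` is affine on
`S`. An affine function on a convex set respects every affine relation `∑ wᵢ = 0`,
`∑ wᵢ • xᵢ = 0` among points of the set (split `w` into its positive and negative parts, which
give two representations of one centre of mass). Hence the span of the points `((x, 1), g₁ x)`,
`x ∈ S`, is the graph of a linear functional on `M × ℝ`; extending it to all of `M × ℝ` and
restricting to `M × {0}` gives `u₀`.
-/

open Finset

theorem ConcaveOn.convex_maximizers {E : Type*} [AddCommGroup E] [Module ℝ E] {s : Set E}
    {f : E → ℝ} (hf : ConcaveOn ℝ s f) : Convex ℝ {x ∈ s | ∀ y ∈ s, f y ≤ f x} := by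
  intro x hx z hz a b ha hb hab
  refine ⟨hf.1 hx.1 hz.1 ha hb hab, fun y hy => ?_⟩
  calc f y = a * f y + b * f y := by rw [← add_mul, hab, one_mul]
    _ ≤ a * f x + b * f z := by gcongr; exacts [hx.2 y hy, hz.2 y hy]
    _ ≤ f (a • x + b • z) := hf.2 hx.1 hz.1 ha hb hab

theorem ConvexOn.map_centerMass_eq_of_concaveOn {E ι : Type*} [AddCommGroup E] [Module ℝ E]
    {s : Set E} {f : E → ℝ} (hcv : ConvexOn ℝ s f) (hcc : ConcaveOn ℝ s f) {t : Finset ι}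
    {w : ι → ℝ} {p : ι → E} (hw₀ : ∀ i ∈ t, 0 ≤ w i) (hw₁ : 0 < ∑ i ∈ t, w i)
    (hp : ∀ i ∈ t, p i ∈ s) : f (t.centerMass w p) = t.centerMass w (f ∘ p) :=
  le_antisymm (hcv.map_centerMass_le hw₀ hw₁ hp) (hcc.le_map_centerMass hw₀ hw₁ hp)

theorem ConvexOn.sum_mul_eq_zero_of_concaveOn {E ι : Type*} [AddCommGroup E] [Module ℝ E]
    {s : Set E} {f : E → ℝ} (hcv : ConvexOn ℝ s f) (hcc : ConcaveOn ℝ s f) {t : Finset ι}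
    {w : ι → ℝ} {p : ι → E} (hp : ∀ i ∈ t, p i ∈ s) (hw : ∑ i ∈ t, w i = 0)
    (hwp : ∑ i ∈ t, w i • p i = 0) : ∑ i ∈ t, w i * f (p i) = 0 := by
  have hsplit_vec : ∑ i ∈ t, w i • p i = ∑ i ∈ t, (w i)⁺ • p i - ∑ i ∈ t, (w i)⁻ • p i := by
    rw [← sum_sub_distrib]
    exact sum_congr rfl fun i _ => by rw [← sub_smul, posPart_sub_negPart]
  have hsplit_real : ∀ q : ι → ℝ,
      ∑ i ∈ t, w i * q i = ∑ i ∈ t, (w i)⁺ * q i - ∑ i ∈ t, (w i)⁻ * q i := fun q => by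
    rw [← sum_sub_distrib]
    exact sum_congr rfl fun i _ => by rw [← sub_mul, posPart_sub_negPart]
  have hmass : ∑ i ∈ t, (w i)⁺ = ∑ i ∈ t, (w i)⁻ := by
    simpa [sub_eq_zero, hw] using (hsplit_real fun _ => 1).symm
  have hmoment : ∑ i ∈ t, (w i)⁺ • p i = ∑ i ∈ t, (w i)⁻ • p i := by
    rw [← sub_eq_zero, ← hsplit_vec, hwp]
  rw [hsplit_real, sub_eq_zero]
  rcases (sum_nonneg fun i _ => posPart_nonneg (w i)).eq_or_lt with hzero | hpos
  · have hpos_zero := (sum_eq_zero_iff_of_nonneg fun i _ => posPart_nonneg (w i)).1 hzero.symm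
    have hneg_zero := (sum_eq_zero_iff_of_nonneg fun i _ => negPart_nonneg (w i)).1
      (hmass ▸ hzero.symm)
    rw [sum_eq_zero fun i hi => by rw [hpos_zero i hi, zero_mul],
      sum_eq_zero fun i hi => by rw [hneg_zero i hi, zero_mul]]
  have hcm :
      t.centerMass (fun i => (w i)⁺) (f ∘ p) = t.centerMass (fun i => (w i)⁻) (f ∘ p) := by
    rw [← hcv.map_centerMass_eq_of_concaveOn hcc (fun i _ => posPart_nonneg (w i)) hpos hp,
      ← hcv.map_centerMass_eq_of_concaveOn hcc (fun i _ => negPart_nonneg (w i)) (hmass ▸ hpos) hp,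
      centerMass, centerMass, hmass, hmoment]
  rw [centerMass, centerMass, hmass] at hcm
  exact smul_right_injective ℝ (inv_ne_zero (hmass ▸ hpos).ne') hcm

theorem Submodule.exists_linearMap_apply_fst_eq_snd {K V V' : Type*} [DivisionRing K]
    [AddCommGroup V] [Module K V] [AddCommGroup V'] [Module K V'] (g : Submodule K (V × V'))
    (hg : ∀ x ∈ g, x.1 = 0 → x.2 = 0) : ∃ f : V →ₗ[K] V', ∀ x ∈ g, f x.1 = x.2 := by
  obtain ⟨f, hf⟩ := LinearMap.exists_extend g.toLinearPMap.toFun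
  refine ⟨f, fun x hx => ?_⟩
  rw [← g.toLinearPMap_graph_eq (fun x hx hx' => hg x hx hx'), LinearPMap.mem_graph_iff] at hx
  obtain ⟨y, hy₁, hy₂⟩ := hx
  rw [← hy₁, ← hy₂]
  exact LinearMap.congr_fun hf y

theorem ConvexOn.exists_dual_sub_eq_of_concaveOn {E : Type*} [AddCommGroup E] [Module ℝ E]
    {s : Set E} {f : E → ℝ} (hcv : ConvexOn ℝ s f) (hcc : ConcaveOn ℝ s f) :
    ∃ u : Module.Dual ℝ E, ∀ x ∈ s, ∀ y ∈ s, f y - f x = u (y - x) := by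
  set graph := Submodule.span ℝ ((fun x => ((x, (1 : ℝ)), f x)) '' s)
  have hgraph : ∀ v ∈ graph, v.1 = 0 → v.2 = 0 := by
    intro v hv hv_fst
    obtain ⟨l, hl, rfl⟩ := (Finsupp.mem_span_image_iff_linearCombination ℝ).1 hv
    simp only [Finsupp.linearCombination_apply, Finsupp.sum, Prod.fst_sum, Prod.snd_sum,
      Prod.smul_mk, Prod.ext_iff, Prod.fst_zero, Prod.snd_zero, smul_eq_mul, mul_one] at hv_fst ⊢
    exact hcv.sum_mul_eq_zero_of_concaveOn hcc (p := id) (fun x hx => hl hx) hv_fst.2 hv_fst.1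
  obtain ⟨Λ, hΛ⟩ := graph.exists_linearMap_apply_fst_eq_snd hgraph
  have hΛs : ∀ x ∈ s, Λ (x, 1) = f x := fun x hx => hΛ _ (Submodule.subset_span ⟨x, hx, rfl⟩)
  refine ⟨Λ ∘ₗ LinearMap.inl ℝ E ℝ, fun x hx y hy => ?_⟩
  rw [← hΛs x hx, ← hΛs y hy, ← map_sub, Prod.mk_sub_mk, sub_self]
  rfl

theorem stmt0_general {M : Type*} [NormedAddCommGroup M] [NormedSpace ℝ M]
    (C : Set M)
    (g₁ g₂ : M → ℝ)
    (hg₁ : ConcaveOn ℝ C g₁) (hg₂ : ConcaveOn ℝ C g₂) :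
    ∃ u₀ : Module.Dual ℝ M,
      ∀ x₁ ∈ {x ∈ C | ∀ y ∈ C, g₁ y + g₂ y ≤ g₁ x + g₂ x},
      ∀ x₂ ∈ {x ∈ C | ∀ y ∈ C, g₁ y + g₂ y ≤ g₁ x + g₂ x},
        g₁ x₂ - g₁ x₁ = u₀ (x₂ - x₁) ∧ g₂ x₂ - g₂ x₁ = -(u₀ (x₂ - x₁)) := by
  set S := {x ∈ C | ∀ y ∈ C, g₁ y + g₂ y ≤ g₁ x + g₂ x}
  have hSC : S ⊆ C := fun x hx => hx.1
  have hSconv : Convex ℝ S := (hg₁.add hg₂).convex_maximizers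
  have hsum_eq : ∀ x ∈ S, ∀ y ∈ S, g₁ x + g₂ x = g₁ y + g₂ y := fun x hx y hy =>
    le_antisymm (hy.2 x hx.1) (hx.2 y hy.1)
  rcases S.eq_empty_or_nonempty with hS | ⟨x₀, hx₀⟩
  · exact ⟨0, by simp [hS]⟩
  have hcv : ConvexOn ℝ S g₁ :=
    ((hg₂.subset hSC hSconv).neg.add_const (g₁ x₀ + g₂ x₀)).congr fun x hx => by
      simp only [Pi.add_apply, Pi.neg_apply]
      linarith [hsum_eq x hx x₀ hx₀]
  obtain ⟨u, hu⟩ := hcv.exists_dual_sub_eq_of_concaveOn (hg₁.subset hSC hSconv)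
  refine ⟨u, fun x₁ hx₁ x₂ hx₂ => ⟨hu x₁ hx₁ x₂ hx₂, ?_⟩⟩
  linarith [hu x₁ hx₁ x₂ hx₂, hsum_eq x₁ hx₁ x₂ hx₂]

/-- On a compact convex subset `C` of a finite-dimensional real vector
space, given continuous concave `g₁ g₂ : C → ℝ`, there is a linear functional `u₀`
on `M` such that on the set `C_max` of maximizers of `g₁ + g₂`, the restrictions of
`g₁` and `g₂` are affine with opposite slopes given by `u₀`. -/
theorem stmt0 {M : Type*} [NormedAddCommGroup M] [NormedSpace ℝ M]
    [FiniteDimensional ℝ M]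
    (C : Set M) (hCcpt : IsCompact C) (hCconv : Convex ℝ C) (hCne : C.Nonempty)
    (g₁ g₂ : M → ℝ)
    (hg₁ : ConcaveOn ℝ C g₁) (hg₂ : ConcaveOn ℝ C g₂)
    (hc₁ : ContinuousOn g₁ C) (hc₂ : ContinuousOn g₂ C) :
    ∃ u₀ : Module.Dual ℝ M,
      ∀ x₁ ∈ {x ∈ C | ∀ y ∈ C, g₁ y + g₂ y ≤ g₁ x + g₂ x},
      ∀ x₂ ∈ {x ∈ C | ∀ y ∈ C, g₁ y + g₂ y ≤ g₁ x + g₂ x},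
        g₁ x₂ - g₁ x₁ = u₀ (x₂ - x₁) ∧ g₂ x₂ - g₂ x₁ = -(u₀ (x₂ - x₁)) :=
  stmt0_general C g₁ g₂ hg₁ hg₂
end

section
/- Let C ⊂ M_ℝ be a compact convex set, g₁, g₂ : C → ℝ continuous concave functions, C_max the set where g₁+g₂ attains its maximum, x ∈ C_max and x' ∈ ri(C_max) (the relative interior of C_max). Then for i = 1, 2, the sup-differential ∂gᵢ(x') is a face of the convex set ∂gᵢ(x). In particular ∂gᵢ(x') ⊆ ∂gᵢ(x). -/
/-!
Since `x'` lies in the relative interior of `C_max`, it is an interior point of a segment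
`[x, y]` with `y ∈ C_max`. As `g₁ + g₂` is constant on `C_max` while both summands are concave,
each `gᵢ` is affine on `[x, y]`. For `u ∈ ∂gᵢ(x')` the two supergradient inequalities at `x` and
`y` then average to an equality, forcing `⟪u, x - x'⟫ = gᵢ x - gᵢ x'`; this is the largest value
of `⟪·, x - x'⟫` on `∂gᵢ(x)`, and `∂gᵢ(x')` is exactly where it is attained. So `∂gᵢ(x')` is an
exposed, hence extreme, face of `∂gᵢ(x)`.
-/

open RealInnerProductSpace Filter Topology

lemma exists_nhds_inter_affineSpan_subset_of_mem_intrinsicInterior {V P : Type*}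
    [AddCommGroup V] [Module ℝ V] [TopologicalSpace P] [AddTorsor V P] {S : Set P} {p : P}
    (hp : p ∈ intrinsicInterior ℝ S) : ∃ U ∈ 𝓝 p, U ∩ affineSpan ℝ S ⊆ S := by
  obtain ⟨q, hq, rfl⟩ := mem_intrinsicInterior.1 hp
  obtain ⟨U, hU, hUS⟩ := (mem_nhds_subtype _ q _).1 (mem_interior_iff_mem_nhds.1 hq)
  exact ⟨U, hU, fun v hv => hUS (show (⟨v, hv.2⟩ : affineSpan ℝ S) ∈ Subtype.val ⁻¹' U from hv.1)⟩

variable {E : Type*} [NormedAddCommGroup E] [InnerProductSpace ℝ E]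

lemma exists_mem_openSegment_of_mem_intrinsicInterior {S : Set E} {x x' : E} (hx : x ∈ S)
    (hx' : x' ∈ intrinsicInterior ℝ S) : ∃ y ∈ S, x' ∈ openSegment ℝ x y := by
  obtain ⟨U, hU, hUS⟩ := exists_nhds_inter_affineSpan_subset_of_mem_intrinsicInterior hx'
  have hx'S : x' ∈ S := intrinsicInterior_subset hx'
  have hlim : Tendsto (fun t : ℝ => x' + t • (x' - x)) (𝓝[>] 0) (𝓝 x') := by
    have : Continuous (fun t : ℝ => x' + t • (x' - x)) := by fun_prop
    simpa using (this.tendsto 0).mono_left nhdsWithin_le_nhds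
  obtain ⟨t, htU, ht : 0 < t⟩ := ((hlim.eventually_mem hU).and eventually_mem_nhdsWithin).exists
  have hspan : x' + t • (x' - x) ∈ affineSpan ℝ S := by
    simpa [add_comm] using AffineSubspace.smul_vsub_vadd_mem _ t
      (subset_affineSpan ℝ S hx'S) (subset_affineSpan ℝ S hx) (subset_affineSpan ℝ S hx'S)
  refine ⟨_, hUS ⟨htU, hspan⟩, mem_openSegment_iff_div.2 ⟨t, 1, ht, one_pos, ?_⟩⟩
  have ht1 : t + 1 ≠ 0 := by positivity
  match_scalars <;> field_simp <;> ring

lemma ConcaveOn.combo_eq_of_add_combo_eq {F : Type*} [AddCommMonoid F] [Module ℝ F]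
    {C : Set F} {f g : F → ℝ} (hf : ConcaveOn ℝ C f) (hg : ConcaveOn ℝ C g) {x y : F}
    (hx : x ∈ C) (hy : y ∈ C) {a b : ℝ} (ha : 0 ≤ a) (hb : 0 ≤ b) (hab : a + b = 1)
    (h : a * (f x + g x) + b * (f y + g y) = f (a • x + b • y) + g (a • x + b • y)) :
    a * f x + b * f y = f (a • x + b • y) := by
  have hfxy := hf.2 hx hy ha hb hab
  have hgxy := hg.2 hx hy ha hb hab
  simp only [smul_eq_mul] at hfxy hgxy
  linarith

def supDifferential (C : Set E) (g : E → ℝ) (x : E) : Set E :=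
  {u | ∀ z ∈ C, g z - g x ≤ ⟪u, z - x⟫}

section supDifferential

variable {C : Set E} {g : E → ℝ} {x x' u : E}

lemma inner_sub_le_of_mem_supDifferential (hu : u ∈ supDifferential C g x) (hx' : x' ∈ C) :
    ⟪u, x - x'⟫ ≤ g x - g x' := by
  have := hu x' hx'
  rw [← neg_sub x x', inner_neg_right] at this
  linarith

lemma mem_supDifferential_of_inner_sub_eq (hu : u ∈ supDifferential C g x)
    (h : ⟪u, x - x'⟫ = g x - g x') : u ∈ supDifferential C g x' := by
  intro z hz
  have := hu z hz
  rw [← sub_add_sub_cancel z x x', inner_add_right, h]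
  linarith

lemma inner_sub_eq_of_mem_supDifferential {y : E} (hx : x ∈ C) (hy : y ∈ C) {a b : ℝ}
    (ha : 0 < a) (hb : 0 ≤ b) (hab : a + b = 1) (hx' : a • x + b • y = x')
    (hg : a * g x + b * g y = g x') (hu : u ∈ supDifferential C g x') :
    ⟪u, x - x'⟫ = g x - g x' := by
  have hxx := hu x hx
  have hyx := hu y hy
  have hbal : a • (x - x') + b • (y - x') = 0 :=
    calc a • (x - x') + b • (y - x') = (a • x + b • y) - (a + b) • x' := by module
      _ = 0 := by rw [hab, one_smul, hx', sub_self]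
  have hinner : a * ⟪u, x - x'⟫ + b * ⟪u, y - x'⟫ = 0 := by
    simpa only [inner_add_right, real_inner_smul_right, inner_zero_right] using
      congrArg (fun v => ⟪u, v⟫) hbal
  have hgap : a * (g x - g x') + b * (g y - g x') = 0 := by linear_combination hg - g x' * hab
  nlinarith [mul_nonneg hb (sub_nonneg.2 hyx)]

lemma isExposed_supDifferential {y : E} (hx : x ∈ C) (hx'C : x' ∈ C) (hy : y ∈ C) {a b : ℝ}
    (ha : 0 < a) (hb : 0 ≤ b) (hab : a + b = 1) (hx' : a • x + b • y = x')
    (hg : a * g x + b * g y = g x') :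
    IsExposed ℝ (supDifferential C g x) (supDifferential C g x') := by
  have hface := fun {u} => inner_sub_eq_of_mem_supDifferential (u := u) hx hy ha hb hab hx' hg
  have hsub : ∀ {u}, u ∈ supDifferential C g x' → u ∈ supDifferential C g x := fun hu => by
    refine mem_supDifferential_of_inner_sub_eq hu ?_
    rw [← neg_sub x, inner_neg_right, hface hu]
    ring
  rintro ⟨u₀, hu₀⟩
  refine ⟨innerSL ℝ (x - x'), Set.ext fun u => ?_⟩
  simp only [Set.mem_ofPred_eq, innerSL_apply_apply, real_inner_comm _ (x - x')]
  refine ⟨fun hu => ⟨hsub hu, fun w hw => ?_⟩, fun ⟨hu, hmax⟩ => ?_⟩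
  · exact (hface hu).symm ▸ inner_sub_le_of_mem_supDifferential hw hx'C
  · refine mem_supDifferential_of_inner_sub_eq hu (le_antisymm ?_ ?_)
    · exact inner_sub_le_of_mem_supDifferential hu hx'C
    · exact (hface hu₀).symm.le.trans (hmax u₀ (hsub hu₀))

end supDifferential

theorem stmt2_general {n : ℕ}
    (C : Set (EuclideanSpace ℝ (Fin n)))
    (g₁ g₂ : EuclideanSpace ℝ (Fin n) → ℝ)
    (hg₁ : ConcaveOn ℝ C g₁) (hg₂ : ConcaveOn ℝ C g₂)
    (x x' : EuclideanSpace ℝ (Fin n))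
    (hx : x ∈ {p ∈ C | ∀ y ∈ C, g₁ y + g₂ y ≤ g₁ p + g₂ p})
    (hx' : x' ∈ intrinsicInterior ℝ {p ∈ C | ∀ y ∈ C, g₁ y + g₂ y ≤ g₁ p + g₂ p}) :
    IsExtreme ℝ {u : EuclideanSpace ℝ (Fin n) | ∀ z ∈ C, g₁ z - g₁ x ≤ ⟪u, z - x⟫}
      {u : EuclideanSpace ℝ (Fin n) | ∀ z ∈ C, g₁ z - g₁ x' ≤ ⟪u, z - x'⟫} ∧
    IsExtreme ℝ {u : EuclideanSpace ℝ (Fin n) | ∀ z ∈ C, g₂ z - g₂ x ≤ ⟪u, z - x⟫}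
      {u : EuclideanSpace ℝ (Fin n) | ∀ z ∈ C, g₂ z - g₂ x' ≤ ⟪u, z - x'⟫} := by
  have hx'max := intrinsicInterior_subset hx'
  have hmax_eq : ∀ p ∈ {p ∈ C | ∀ y ∈ C, g₁ y + g₂ y ≤ g₁ p + g₂ p},
      g₁ p + g₂ p = g₁ x' + g₂ x' := fun p hp => le_antisymm (hx'max.2 p hp.1) (hp.2 x' hx'max.1)
  obtain ⟨y, hy, a, b, ha, hb, hab, rfl⟩ := exists_mem_openSegment_of_mem_intrinsicInterior hx hx'
  have hsum : a * (g₁ x + g₂ x) + b * (g₁ y + g₂ y) =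
      g₁ (a • x + b • y) + g₂ (a • x + b • y) := by
    rw [hmax_eq x hx, hmax_eq y hy]
    linear_combination (g₁ (a • x + b • y) + g₂ (a • x + b • y)) * hab
  have haff₁ := hg₁.combo_eq_of_add_combo_eq hg₂ hx.1 hy.1 ha.le hb.le hab hsum
  have haff₂ := hg₂.combo_eq_of_add_combo_eq hg₁ hx.1 hy.1 ha.le hb.le hab (by linarith)
  exact ⟨(isExposed_supDifferential hx.1 hx'max.1 hy.1 ha hb.le hab rfl haff₁).isExtreme,
    (isExposed_supDifferential hx.1 hx'max.1 hy.1 ha hb.le hab rfl haff₂).isExtreme⟩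

/-- For continuous concave `g₁, g₂` on a compact convex `C`, a maximizer `x`
of `g₁ + g₂` and a point `x'` in the relative interior of the set `C_max` of maximizers,
the sup-differential `∂gᵢ(x')` is a face of `∂gᵢ(x)` for `i = 1, 2`
(in particular `∂gᵢ(x') ⊆ ∂gᵢ(x)`). -/
theorem stmt2 {n : ℕ}
    (C : Set (EuclideanSpace ℝ (Fin n))) (hCcpt : IsCompact C) (hCconv : Convex ℝ C)
    (g₁ g₂ : EuclideanSpace ℝ (Fin n) → ℝ)
    (hg₁ : ConcaveOn ℝ C g₁) (hg₂ : ConcaveOn ℝ C g₂)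
    (hc₁ : ContinuousOn g₁ C) (hc₂ : ContinuousOn g₂ C)
    (x x' : EuclideanSpace ℝ (Fin n))
    (hx : x ∈ {p ∈ C | ∀ y ∈ C, g₁ y + g₂ y ≤ g₁ p + g₂ p})
    (hx' : x' ∈ intrinsicInterior ℝ {p ∈ C | ∀ y ∈ C, g₁ y + g₂ y ≤ g₁ p + g₂ p}) :
    IsExtreme ℝ {u : EuclideanSpace ℝ (Fin n) | ∀ z ∈ C, g₁ z - g₁ x ≤ ⟪u, z - x⟫}
      {u : EuclideanSpace ℝ (Fin n) | ∀ z ∈ C, g₁ z - g₁ x' ≤ ⟪u, z - x'⟫} ∧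
    IsExtreme ℝ {u : EuclideanSpace ℝ (Fin n) | ∀ z ∈ C, g₂ z - g₂ x ≤ ⟪u, z - x⟫}
      {u : EuclideanSpace ℝ (Fin n) | ∀ z ∈ C, g₂ z - g₂ x' ≤ ⟪u, z - x'⟫} :=
  stmt2_general C g₁ g₂ hg₁ hg₂ x x' hx hx'
end

section
/- Let C ⊂ M_ℝ = ℝⁿ be a compact convex set with nonempty interior, g₁, g₂ : C → ℝ continuous concave functions, and let g_i^∨(u) = inf_{x ∈ C} (⟨u, x⟩ - g_i(x)) denote the Legendre–Fenchel dual, a concave function on N_ℝ. Define Φ on the space ℰ of Borel probability measures on N_ℝ with finite first moment by Φ(μ) = ∫ g₁^∨ dμ + g₂^∨(-E[μ]) + max_{x ∈ C}(g₁(x)+g₂(x)), where E[μ] = ∫ u dμ(u). Then Φ is upper semicontinuous with respect to the weak-∗ topology induced by bounded continuous functions on N_ℝ. -/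
/-!
Writing `E[μ]` for the mean, `⟪-E[μ], x⟫ = -∫ ⟪x, u⟫ dμ`, so `Φ(μ)` is the infimum over `x ∈ C` of
`F_x(μ) = ∫ (g₁^∨(u) - ⟪x, u⟫) dμ - g₂(x) + max_C (g₁ + g₂)`. The integrand of `F_x` is continuous
and bounded above by `-g₁(x)`, so its integral is the decreasing limit of the integrals of the
bounded continuous truncations `max (·) (-k)`, each weakly continuous in `μ`. Hence every `F_x` is
upper semicontinuous, and so is their infimum `Φ`.
-/

open MeasureTheory RealInnerProductSpace

/-- The Legendre–Fenchel dual `g^∨(u) = inf_{x ∈ C} (⟨u,x⟩ - g(x))`. -/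
noncomputable def lfDual {n : ℕ} (C : Set (EuclideanSpace ℝ (Fin n)))
    (g : EuclideanSpace ℝ (Fin n) → ℝ) (u : EuclideanSpace ℝ (Fin n)) : ℝ :=
  sInf ((fun x => ⟪u, x⟫ - g x) '' C)

/-- The functional `Φ(μ) = ∫ g₁^∨ dμ + g₂^∨(-E[μ]) + max_C (g₁+g₂)`. -/
noncomputable def phiFun {n : ℕ} (C : Set (EuclideanSpace ℝ (Fin n)))
    (g₁ g₂ : EuclideanSpace ℝ (Fin n) → ℝ)
    (μ : Measure (EuclideanSpace ℝ (Fin n))) : ℝ :=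
  (∫ u, lfDual C g₁ u ∂μ) + lfDual C g₂ (-(∫ u, u ∂μ)) +
    sSup ((fun x => g₁ x + g₂ x) '' C)

/-- The space `ℰ` of Borel probability measures on `ℝⁿ` with finite first moment,
with the topology induced by the weak-∗ topology w.r.t. bounded continuous functions. -/
abbrev finiteFirstMoment (n : ℕ) :=
  {μ : ProbabilityMeasure (EuclideanSpace ℝ (Fin n)) //
    Integrable (fun u => ‖u‖) (μ : Measure (EuclideanSpace ℝ (Fin n)))}

open Filter Topology Bornology
open scoped NNReal

theorem upperSemicontinuous_of_forall_le_of_exists_lt {α ι β : Type*} [TopologicalSpace α]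
    [Preorder β] {f : α → β} {F : ι → α → β} {s : Set ι}
    (hF : ∀ i ∈ s, UpperSemicontinuous (F i)) (hle : ∀ i ∈ s, ∀ a, f a ≤ F i a)
    (hlt : ∀ a y, f a < y → ∃ i ∈ s, F i a < y) : UpperSemicontinuous f := by
  intro a y hy
  obtain ⟨i, hi, hiy⟩ := hlt a y hy
  filter_upwards [hF i hi a y hiy] with b hb
  exact (hle i hi b).trans_lt hb

theorem LipschitzWith.integrable_of_integrable_norm {E F : Type*} [NormedAddCommGroup E]
    [MeasurableSpace E] [OpensMeasurableSpace E] [NormedAddCommGroup F]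
    [SecondCountableTopologyEither E F] {μ : Measure E} [IsFiniteMeasure μ] {K : ℝ≥0} {f : E → F}
    (hf : LipschitzWith K f) (hμ : Integrable (fun u => ‖u‖) μ) : Integrable f μ := by
  refine ((integrable_const ‖f 0‖).add (hμ.const_mul K)).mono' hf.continuous.aestronglyMeasurable
    (ae_of_all _ fun u => ?_)
  calc ‖f u‖ ≤ ‖f 0‖ + ‖f u - f 0‖ := norm_le_insert' _ _
    _ ≤ ‖f 0‖ + K * ‖u‖ := by
      gcongr
      simpa [dist_eq_norm] using hf.dist_le_mul u 0

theorem upperSemicontinuous_integral_of_le {X Y : Type*} [TopologicalSpace X] [MeasurableSpace X]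
    [OpensMeasurableSpace X] [TopologicalSpace Y] {ν : Y → ProbabilityMeasure X} (hν : Continuous ν)
    {f : X → ℝ} {c : ℝ} (hf : Continuous f) (hfc : ∀ x, f x ≤ c)
    (hint : ∀ y, Integrable f (ν y)) : UpperSemicontinuous fun y => ∫ x, f x ∂(ν y) := by
  intro y₀ t ht
  have htrunc : Tendsto (fun k : ℕ => ∫ x, max (f x) (-k) ∂(ν y₀)) atTop (𝓝 (∫ x, f x ∂(ν y₀))) :=
    integral_tendsto_of_tendsto_of_antitone (fun k => (hint y₀).sup (integrable_const _))
      (hint y₀)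
      (ae_of_all _ fun x k l hkl => max_le_max le_rfl (neg_le_neg (Nat.cast_le.2 hkl)))
      (ae_of_all _ fun x => tendsto_atTop_of_eventually_const (i₀ := ⌈-f x⌉₊) fun k hk =>
        max_eq_left (neg_le.1 (Nat.ceil_le.1 hk)))
  obtain ⟨k, hk⟩ := (htrunc.eventually_lt_const ht).exists
  let fk : BoundedContinuousFunction X ℝ :=
    .mkOfBound ⟨fun x => max (f x) (-k), hf.max continuous_const⟩ (max c (-k) - -k) fun x x' =>
      Real.dist_le_of_mem_Icc ⟨le_max_right _ _, max_le_max (hfc x) le_rfl⟩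
        ⟨le_max_right _ _, max_le_max (hfc x') le_rfl⟩
  have hfk : Continuous fun y => ∫ x, fk x ∂(ν y) :=
    (ProbabilityMeasure.continuous_integral_boundedContinuousFunction fk).comp hν
  filter_upwards [hfk.continuousAt.eventually_lt continuousAt_const hk] with y hy
  exact (integral_mono (hint y) ((hint y).sup (integrable_const _))
    fun x => le_max_left _ (-(k : ℝ))).trans_lt hy

section LegendreFenchel

variable {n : ℕ} {C : Set (EuclideanSpace ℝ (Fin n))} {g : EuclideanSpace ℝ (Fin n) → ℝ}

theorem bddBelow_image_inner_sub (hC : IsBounded C) (hg : BddAbove (g '' C))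
    (u : EuclideanSpace ℝ (Fin n)) : BddBelow ((fun x => ⟪u, x⟫ - g x) '' C) := by
  obtain ⟨R, hR⟩ := hC.exists_norm_le
  obtain ⟨B, hB⟩ := hg
  refine ⟨-(‖u‖ * R) - B, ?_⟩
  rintro _ ⟨x, hx, rfl⟩
  have hinner : -(‖u‖ * R) ≤ ⟪u, x⟫ :=
    calc -(‖u‖ * R) ≤ -(‖u‖ * ‖x‖) := by gcongr; exact hR x hx
      _ ≤ ⟪u, x⟫ := neg_le.1 (by simpa using real_inner_le_norm (-u) x)
  linarith [hB (Set.mem_image_of_mem g hx)]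

theorem lfDual_le (hC : IsBounded C) (hg : BddAbove (g '' C)) {x : EuclideanSpace ℝ (Fin n)}
    (hx : x ∈ C) (u : EuclideanSpace ℝ (Fin n)) : lfDual C g u ≤ ⟪u, x⟫ - g x :=
  csInf_le (bddBelow_image_inner_sub hC hg u) ⟨x, hx, rfl⟩

/-- An infimum of the affine functions `u ↦ ⟪u, x⟫ - g x`, each `R`-Lipschitz when `‖x‖ ≤ R`. -/
theorem lfDual_lipschitzWith (hCne : C.Nonempty) {R : ℝ≥0} (hR : ∀ x ∈ C, ‖x‖ ≤ R)
    (hg : BddAbove (g '' C)) : LipschitzWith R (lfDual C g) := by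
  have hC : IsBounded C := isBounded_iff_forall_norm_le.2 ⟨R, hR⟩
  refine LipschitzWith.of_le_add_mul R fun u v => ?_
  suffices lfDual C g u - R * dist u v ≤ lfDual C g v by linarith
  refine le_csInf (hCne.image _) ?_
  rintro _ ⟨x, hx, rfl⟩
  have hshift : ⟪u - v, x⟫ ≤ R * dist u v :=
    calc ⟪u - v, x⟫ ≤ ‖u - v‖ * ‖x‖ := real_inner_le_norm _ _
      _ ≤ ‖u - v‖ * R := by gcongr; exact hR x hx
      _ = R * dist u v := by rw [dist_eq_norm, mul_comm]
  calc lfDual C g u - R * dist u v ≤ (⟪u, x⟫ - g x) - ⟪u - v, x⟫ :=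
        sub_le_sub (lfDual_le hC hg hx u) hshift
    _ = ⟪v, x⟫ - g x := by rw [inner_sub_left]; ring

end LegendreFenchel

theorem integral_sub_inner {E : Type*} [NormedAddCommGroup E] [InnerProductSpace ℝ E]
    [CompleteSpace E] [MeasurableSpace E] {μ : Measure E} {f : E → ℝ} (hf : Integrable f μ)
    (hid : Integrable (fun u => u) μ) (x : E) :
    ∫ u, (f u - ⟪x, u⟫) ∂μ = ∫ u, f u ∂μ + ⟪-∫ u, u ∂μ, x⟫ := by
  rw [integral_sub hf (hid.const_inner x), integral_inner hid, inner_neg_left, real_inner_comm]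
  ring

theorem stmt5_general {n : ℕ}
    (C : Set (EuclideanSpace ℝ (Fin n))) (hCcpt : IsCompact C)
    (hCint : (interior C).Nonempty)
    (g₁ g₂ : EuclideanSpace ℝ (Fin n) → ℝ)
    (hc₁ : ContinuousOn g₁ C) (hc₂ : ContinuousOn g₂ C) :
    UpperSemicontinuous (fun μ : finiteFirstMoment n =>
      phiFun C g₁ g₂ (μ.1 : Measure (EuclideanSpace ℝ (Fin n)))) := by
  have hCne : C.Nonempty := hCint.mono interior_subset
  obtain ⟨R, hR0, hR⟩ := hCcpt.isBounded.exists_pos_norm_le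
  lift R to ℝ≥0 using hR0.le
  have hLip := lfDual_lipschitzWith hCne hR (hCcpt.bddAbove_image hc₁)
  have hint : ∀ μ : finiteFirstMoment n,
      Integrable (lfDual C g₁) (μ.1 : Measure (EuclideanSpace ℝ (Fin n))) :=
    fun μ => hLip.integrable_of_integrable_norm μ.2
  have hid : ∀ μ : finiteFirstMoment n,
      Integrable (fun u => u) (μ.1 : Measure (EuclideanSpace ℝ (Fin n))) :=
    fun μ => (integrable_norm_iff aestronglyMeasurable_id).1 μ.2
  set M := sSup ((fun x => g₁ x + g₂ x) '' C)
  let E : finiteFirstMoment n → EuclideanSpace ℝ (Fin n) :=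
    fun μ => ∫ u, u ∂(μ.1 : Measure (EuclideanSpace ℝ (Fin n)))
  let F : EuclideanSpace ℝ (Fin n) → finiteFirstMoment n → ℝ := fun x μ =>
    ∫ u, (lfDual C g₁ u - ⟪x, u⟫) ∂(μ.1 : Measure (EuclideanSpace ℝ (Fin n))) + (-g₂ x + M)
  have hF : ∀ x μ, F x μ = ∫ u, lfDual C g₁ u ∂(μ.1 : Measure (EuclideanSpace ℝ (Fin n))) +
      (⟪-E μ, x⟫ - g₂ x) + M := fun x μ => by
    simp only [F, E, integral_sub_inner (hint μ) (hid μ)]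
    ring
  refine upperSemicontinuous_of_forall_le_of_exists_lt (s := C) (F := F)
    (fun x hx => ?_) (fun x hx μ => ?_) (fun μ y hy => ?_)
  · refine (upperSemicontinuous_integral_of_le continuous_subtype_val
      (f := fun u => lfDual C g₁ u - ⟪x, u⟫) (c := -g₁ x)
      (hLip.continuous.sub (continuous_const.inner continuous_id)) (fun u => ?_)
      fun μ => (hint μ).sub ((hid μ).const_inner x)).add upperSemicontinuous_const
    linarith [lfDual_le hCcpt.isBounded (hCcpt.bddAbove_image hc₁) hx u, real_inner_comm x u]
  · rw [hF, phiFun]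
    linarith [lfDual_le hCcpt.isBounded (hCcpt.bddAbove_image hc₂) hx (-E μ)]
  · rw [phiFun] at hy
    obtain ⟨_, ⟨x, hx, rfl⟩, hxy⟩ := exists_lt_of_csInf_lt (hCne.image _)
      (show lfDual C g₂ (-E μ) <
        y - ∫ u, lfDual C g₁ u ∂(μ.1 : Measure (EuclideanSpace ℝ (Fin n))) - M by linarith)
    refine ⟨x, hx, ?_⟩
    rw [hF]
    linarith

/-- For `C ⊂ ℝⁿ` compact convex with nonempty interior and `g₁, g₂`
continuous concave on `C`, the functional `Φ` is upper semicontinuous on `ℰ`. -/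
theorem stmt5 {n : ℕ}
    (C : Set (EuclideanSpace ℝ (Fin n))) (hCcpt : IsCompact C) (hCconv : Convex ℝ C)
    (hCint : (interior C).Nonempty)
    (g₁ g₂ : EuclideanSpace ℝ (Fin n) → ℝ)
    (hg₁ : ConcaveOn ℝ C g₁) (hg₂ : ConcaveOn ℝ C g₂)
    (hc₁ : ContinuousOn g₁ C) (hc₂ : ContinuousOn g₂ C) :
    UpperSemicontinuous (fun μ : finiteFirstMoment n =>
      phiFun C g₁ g₂ (μ.1 : Measure (EuclideanSpace ℝ (Fin n)))) :=
  stmt5_general C hCcpt hCint g₁ g₂ hc₁ hc₂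
end

section
/- Let C ⊂ M_ℝ be a compact convex set with nonempty interior and g₁, g₂ : C → ℝ continuous concave functions, and Φ(μ) = ∫ g₁^∨ dμ + g₂^∨(-E[μ]) + max_C(g₁+g₂) on ℰ. Then there exist constants c₁ ≥ 0 and c₂ > 0 such that for all μ ∈ ℰ, Φ(μ) ≤ c₁ - c₂ ∫ ‖u‖ dμ(u). -/
/-!
Let `‖x‖ ≤ R` and `|g x| ≤ K` on `C`. Then `g^∨` is `R`-Lipschitz and bounded below by
`-(R ‖u‖ + K)`, so it is integrable against measures with finite first moment. If
`closedBall x₀ r ⊆ C`, testing the infimum at `x = x₀ - r u / ‖u‖` gives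
`g^∨(u) ≤ ⟪x₀, u⟫ - r ‖u‖ + K`. Integrating this for `g₁`, and evaluating it at `-E[μ]` for
`g₂`, the linear terms `±⟪x₀, E[μ]⟫` cancel and `Φ(μ) ≤ 2 (K₁ + K₂) - r ∫ ‖u‖ dμ`.
-/

open MeasureTheory RealInnerProductSpace

open Set Metric

section lfDual

variable {n : ℕ} {C : Set (EuclideanSpace ℝ (Fin n))} {g : EuclideanSpace ℝ (Fin n) → ℝ}
  {R K : ℝ}

lemma neg_le_inner_sub (hR : ∀ x ∈ C, ‖x‖ ≤ R) (hK : ∀ x ∈ C, ‖g x‖ ≤ K)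
    (u : EuclideanSpace ℝ (Fin n)) {x : EuclideanSpace ℝ (Fin n)} (hx : x ∈ C) :
    -(‖u‖ * R + K) ≤ ⟪u, x⟫ - g x := by
  have hinner : -(‖u‖ * ‖x‖) ≤ ⟪u, x⟫ := neg_le_of_abs_le (abs_real_inner_le_norm u x)
  have hnorm : ‖u‖ * ‖x‖ ≤ ‖u‖ * R := by gcongr; exact hR x hx
  have hg : g x ≤ K := (Real.le_norm_self _).trans (hK x hx)
  linarith

variable (hR : ∀ x ∈ C, ‖x‖ ≤ R) (hK : ∀ x ∈ C, ‖g x‖ ≤ K)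
include hR hK

lemma lfDual_le_of_mem (u : EuclideanSpace ℝ (Fin n)) {x : EuclideanSpace ℝ (Fin n)}
    (hx : x ∈ C) : lfDual C g u ≤ ⟪u, x⟫ - g x :=
  csInf_le ⟨_, forall_mem_image.2 fun _ hy => neg_le_inner_sub hR hK u hy⟩
    (mem_image_of_mem _ hx)

lemma neg_le_lfDual (hC : C.Nonempty) (u : EuclideanSpace ℝ (Fin n)) :
    -(‖u‖ * R + K) ≤ lfDual C g u :=
  le_csInf (hC.image _) (forall_mem_image.2 fun _ hx => neg_le_inner_sub hR hK u hx)

lemma lfDual_le_add_mul_norm_sub (hC : C.Nonempty) (u v : EuclideanSpace ℝ (Fin n)) :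
    lfDual C g u ≤ lfDual C g v + R * ‖u - v‖ := by
  rw [← sub_le_iff_le_add]
  refine le_csInf (hC.image _) (forall_mem_image.2 fun x hx => ?_)
  have hu := lfDual_le_of_mem hR hK u hx
  have hdiff : ⟪u - v, x⟫ ≤ ‖u - v‖ * R :=
    (real_inner_le_norm _ _).trans (by gcongr; exact hR x hx)
  rw [inner_sub_left] at hdiff
  linarith

lemma lipschitzWith_lfDual (hC : C.Nonempty) : LipschitzWith R.toNNReal (lfDual C g) :=
  LipschitzWith.of_le_add_mul' R fun u v => by
    simpa only [dist_eq_norm] using lfDual_le_add_mul_norm_sub hR hK hC u v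

lemma integrable_lfDual (hC : C.Nonempty) {μ : Measure (EuclideanSpace ℝ (Fin n))}
    [IsFiniteMeasure μ] (hμ : Integrable (fun u => ‖u‖) μ) : Integrable (lfDual C g) μ := by
  obtain ⟨x₀, hx₀⟩ := hC
  have hid : Integrable (fun u => u) μ := (integrable_norm_iff aestronglyMeasurable_id).1 hμ
  exact integrable_of_le_of_le
    (lipschitzWith_lfDual hR hK ⟨x₀, hx₀⟩).continuous.aestronglyMeasurable
    (ae_of_all _ (neg_le_lfDual hR hK ⟨x₀, hx₀⟩))
    (ae_of_all _ fun u => lfDual_le_of_mem hR hK u hx₀)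
    ((hμ.mul_const R).add (integrable_const K)).neg
    ((hid.inner_const x₀).sub (integrable_const _))

variable {x₀ : EuclideanSpace ℝ (Fin n)} {r : ℝ} (hball : closedBall x₀ r ⊆ C) (hr : 0 ≤ r)
include hball hr

lemma lfDual_le_inner_sub_mul_norm (u : EuclideanSpace ℝ (Fin n)) :
    lfDual C g u ≤ ⟪x₀, u⟫ - r * ‖u‖ + K := by
  -- for `u = 0` the junk value `r / 0 = 0` makes `x = x₀`
  set x := x₀ - (r / ‖u‖) • u
  have hx : x ∈ C := hball <| by
    rw [mem_closedBall, dist_eq_norm, sub_sub_cancel_left, norm_neg, norm_smul,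
      Real.norm_of_nonneg (by positivity)]
    rcases eq_or_ne ‖u‖ 0 with hu | hu
    · simpa [hu] using hr
    · rw [div_mul_cancel₀ r hu]
  have hinner : ⟪u, x⟫ = ⟪x₀, u⟫ - r * ‖u‖ := by
    rw [inner_sub_right, real_inner_smul_right, real_inner_self_eq_norm_sq, real_inner_comm]
    rcases eq_or_ne ‖u‖ 0 with hu | hu
    · simp [hu]
    · field_simp
  have hg : -K ≤ g x := neg_le_of_abs_le (by simpa only [Real.norm_eq_abs] using hK x hx)
  linarith [lfDual_le_of_mem hR hK u hx]

lemma integral_lfDual_le {μ : Measure (EuclideanSpace ℝ (Fin n))} [IsProbabilityMeasure μ]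
    (hμ : Integrable (fun u => ‖u‖) μ) :
    ∫ u, lfDual C g u ∂μ ≤ ⟪x₀, ∫ u, u ∂μ⟫ - r * ∫ u, ‖u‖ ∂μ + K := by
  have hid : Integrable (fun u => u) μ := (integrable_norm_iff aestronglyMeasurable_id).1 hμ
  calc ∫ u, lfDual C g u ∂μ ≤ ∫ u, (⟪x₀, u⟫ - r * ‖u‖ + K) ∂μ :=
        integral_mono (integrable_lfDual hR hK ⟨x₀, hball (mem_closedBall_self hr)⟩ hμ)
          (((hid.const_inner x₀).sub (hμ.const_mul r)).add (integrable_const K))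
          (lfDual_le_inner_sub_mul_norm hR hK hball hr)
    _ = ⟪x₀, ∫ u, u ∂μ⟫ - r * ∫ u, ‖u‖ ∂μ + K := by
        rw [integral_add (f := fun u => ⟪x₀, u⟫ - r * ‖u‖)
            ((hid.const_inner x₀).sub (hμ.const_mul r)) (integrable_const K),
          integral_sub (hid.const_inner x₀) (hμ.const_mul r), integral_const_mul,
          integral_inner hid, integral_const, probReal_univ, one_smul]

end lfDual

theorem exists_phiFun_le_sub_mul_integral_norm {n : ℕ} {C : Set (EuclideanSpace ℝ (Fin n))}
    {g₁ g₂ : EuclideanSpace ℝ (Fin n) → ℝ} {x₀ : EuclideanSpace ℝ (Fin n)} {r : ℝ}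
    (hC : IsCompact C) (hball : closedBall x₀ r ⊆ C) (hr : 0 ≤ r)
    (hc₁ : ContinuousOn g₁ C) (hc₂ : ContinuousOn g₂ C) :
    ∃ c : ℝ, ∀ (μ : Measure (EuclideanSpace ℝ (Fin n))) [IsProbabilityMeasure μ],
      Integrable (fun u => ‖u‖) μ → phiFun C g₁ g₂ μ ≤ c - r * ∫ u, ‖u‖ ∂μ := by
  obtain ⟨R, hR⟩ := hC.isBounded.exists_norm_le
  obtain ⟨K₁, hK₁⟩ := hC.exists_bound_of_continuousOn hc₁
  obtain ⟨K₂, hK₂⟩ := hC.exists_bound_of_continuousOn hc₂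
  refine ⟨2 * (K₁ + K₂), fun μ _ hμ => ?_⟩
  have h₁ := integral_lfDual_le hR hK₁ hball hr hμ
  have h₂ := lfDual_le_inner_sub_mul_norm hR hK₂ hball hr (-∫ u, u ∂μ)
  have hsup : sSup ((fun x => g₁ x + g₂ x) '' C) ≤ K₁ + K₂ :=
    csSup_le ((nonempty_closedBall.2 hr).mono hball |>.image _) <| forall_mem_image.2
      fun x hx => add_le_add ((Real.le_norm_self _).trans (hK₁ x hx))
        ((Real.le_norm_self _).trans (hK₂ x hx))
  rw [inner_neg_right] at h₂
  have : 0 ≤ r * ‖-∫ u, u ∂μ‖ := by positivity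
  unfold phiFun
  linarith

theorem stmt7_general {n : ℕ}
    (C : Set (EuclideanSpace ℝ (Fin n))) (hCcpt : IsCompact C)
    (hCint : (interior C).Nonempty)
    (g₁ g₂ : EuclideanSpace ℝ (Fin n) → ℝ)
    (hc₁ : ContinuousOn g₁ C) (hc₂ : ContinuousOn g₂ C) :
    ∃ c₁ c₂ : ℝ, 0 ≤ c₁ ∧ 0 < c₂ ∧
      ∀ μ : ProbabilityMeasure (EuclideanSpace ℝ (Fin n)),
        Integrable (fun u => ‖u‖) (μ : Measure (EuclideanSpace ℝ (Fin n))) →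
        phiFun C g₁ g₂ (μ : Measure (EuclideanSpace ℝ (Fin n))) ≤
          c₁ - c₂ * ∫ u, ‖u‖ ∂(μ : Measure (EuclideanSpace ℝ (Fin n))) := by
  obtain ⟨x₀, hx₀⟩ := hCint
  obtain ⟨r, hr, hball⟩ := nhds_basis_closedBall.mem_iff.1 (mem_interior_iff_mem_nhds.1 hx₀)
  obtain ⟨c, hc⟩ := exists_phiFun_le_sub_mul_integral_norm hCcpt hball hr.le hc₁ hc₂
  exact ⟨max c 0, r, le_max_right c 0, hr, fun μ hμ =>
    (hc μ hμ).trans (sub_le_sub_right (le_max_left c 0) _)⟩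

/-- There are constants `c₁ ≥ 0` and `c₂ > 0` with
`Φ(μ) ≤ c₁ - c₂ ∫ ‖u‖ dμ` for every probability measure `μ` with finite first moment. -/
theorem stmt7 {n : ℕ}
    (C : Set (EuclideanSpace ℝ (Fin n))) (hCcpt : IsCompact C) (hCconv : Convex ℝ C)
    (hCint : (interior C).Nonempty)
    (g₁ g₂ : EuclideanSpace ℝ (Fin n) → ℝ)
    (hg₁ : ConcaveOn ℝ C g₁) (hg₂ : ConcaveOn ℝ C g₂)
    (hc₁ : ContinuousOn g₁ C) (hc₂ : ContinuousOn g₂ C) :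
    ∃ c₁ c₂ : ℝ, 0 ≤ c₁ ∧ 0 < c₂ ∧
      ∀ μ : ProbabilityMeasure (EuclideanSpace ℝ (Fin n)),
        Integrable (fun u => ‖u‖) (μ : Measure (EuclideanSpace ℝ (Fin n))) →
        phiFun C g₁ g₂ (μ : Measure (EuclideanSpace ℝ (Fin n))) ≤
          c₁ - c₂ * ∫ u, ‖u‖ ∂(μ : Measure (EuclideanSpace ℝ (Fin n))) :=
  stmt7_general C hCcpt hCint g₁ g₂ hc₁ hc₂
end

section
/- Let Φ : ℰ → ℝ be nonpositive and satisfy Φ(μ) ≤ c₁ - c₂ ∫‖u‖dμ for constants c₁ ≥ 0, c₂ > 0, and suppose Φ is upper semicontinuous on ℰ for the weak-∗ topology with respect to bounded continuous functions. If (μ_l) is a net in ℰ with Φ(μ_l) → 0, then (μ_l) has at least one cluster point in the space of probability measures on ℝⁿ, and every cluster point μ has finite first moment and satisfies Φ(μ) = 0. -/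
/-!
The bound `Φ ≤ c₁ - c₂ ∫ ‖u‖` and `Φ(μ_l) → 0` force the first moments of the net to be
eventually at most `(c₁ + 1) / c₂`. By Markov's inequality such a sublevel set of the first
moment is tight, and it is weakly closed because `ρ ↦ ∫ ‖u‖ dρ` is a supremum of the continuous
maps `ρ ↦ ∫ min ‖u‖ k dρ`; by Prokhorov's theorem it is compact. Hence the net has cluster
points, all of them in the sublevel set, and upper semicontinuity gives `Φ(ν) ≥ lim Φ(μ_l) = 0`.
-/

open MeasureTheory Filter Topology
open scoped ENNReal NNReal BoundedContinuousFunction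

theorem UpperSemicontinuousAt.le_of_mapClusterPt {X α β : Type*} [TopologicalSpace X]
    [LinearOrder β] [DenselyOrdered β] [TopologicalSpace β] [ClosedIicTopology β]
    {f : X → β} {x : X} (hf : UpperSemicontinuousAt f x) {F : Filter α} {u : α → X}
    (hx : MapClusterPt x F u) {a : β} (ha : Tendsto (f ∘ u) F (𝓝 a)) : a ≤ f x := by
  by_contra! hlt
  obtain ⟨y, hxy, hya⟩ := exists_between hlt
  obtain ⟨l, hl_lt, hl_gt⟩ :=
    ((hx.frequently (hf y hxy)).and_eventually (ha.eventually (eventually_gt_nhds hya))).exists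
  exact lt_asymm hl_lt hl_gt

namespace ContinuousMap

variable {X : Type*} [TopologicalSpace X]

noncomputable def truncate (g : C(X, ℝ≥0)) (M : ℝ≥0) : X →ᵇ ℝ≥0 :=
  .mkOfBound ⟨fun x => min (g x) M, by fun_prop⟩ M fun x y => by
    rw [NNReal.dist_eq]
    exact abs_sub_le_of_nonneg_of_le (by positivity) (by simp) (by positivity) (by simp)

@[simp]
theorem truncate_apply (g : C(X, ℝ≥0)) (M : ℝ≥0) (x : X) : g.truncate M x = min (g x) M := rfl

theorem iSup_truncate_natCast (g : C(X, ℝ≥0)) (x : X) :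
    ⨆ k : ℕ, (g.truncate k x : ℝ≥0∞) = g x := by
  simp only [truncate_apply, ENNReal.coe_min, ENNReal.coe_natCast, ← inf_iSup_eq,
    ENNReal.iSup_natCast, inf_top_eq]

end ContinuousMap

namespace MeasureTheory.ProbabilityMeasure

variable {X : Type*} [TopologicalSpace X] [MeasurableSpace X] [OpensMeasurableSpace X]

theorem lowerSemicontinuous_lintegral (g : C(X, ℝ≥0)) :
    LowerSemicontinuous fun ρ : ProbabilityMeasure X => ∫⁻ x, g x ∂(ρ : Measure X) := by
  have hsup : (fun ρ : ProbabilityMeasure X => ∫⁻ x, g x ∂(ρ : Measure X)) =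
      fun ρ : ProbabilityMeasure X => ⨆ k : ℕ, ∫⁻ x, g.truncate k x ∂(ρ : Measure X) := by
    funext ρ
    simp_rw [← g.iSup_truncate_natCast]
    refine lintegral_iSup (fun k => by fun_prop) fun k k' hkk' x => ?_
    simp only [ContinuousMap.truncate_apply, ENNReal.coe_le_coe]
    exact min_le_min_left _ (by exact_mod_cast hkk')
  rw [hsup]
  exact lowerSemicontinuous_iSup fun k =>
    (continuous_lintegral_boundedContinuousFunction _).lowerSemicontinuous

end MeasureTheory.ProbabilityMeasure

section FirstMoment

variable {E : Type*} [NormedAddCommGroup E] [MeasurableSpace E]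

def firstMomentSublevel (C : ℝ≥0∞) : Set (ProbabilityMeasure E) :=
  {ρ | ∫⁻ x, ‖x‖ₑ ∂(ρ : Measure E) ≤ C}

theorem isClosed_firstMomentSublevel [OpensMeasurableSpace E] (C : ℝ≥0∞) :
    IsClosed (firstMomentSublevel (E := E) C) :=
  (ProbabilityMeasure.lowerSemicontinuous_lintegral ⟨nnnorm, continuous_nnnorm⟩).isClosed_preimage C

theorem isTightMeasureSet_setOf_lintegral_enorm_le [OpensMeasurableSpace E] [ProperSpace E]
    {C : ℝ≥0∞} (hC : C ≠ ∞) : IsTightMeasureSet {μ : Measure E | ∫⁻ x, ‖x‖ₑ ∂μ ≤ C} := by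
  refine isTightMeasureSet_of_tendsto_measure_norm_gt ?_
  have hmarkov : Tendsto (fun r : ℝ => C / ENNReal.ofReal r) atTop (𝓝 0) := by
    simpa using ENNReal.Tendsto.const_div (ENNReal.tendsto_ofReal_atTop) (Or.inr hC)
  refine tendsto_of_tendsto_of_tendsto_of_le_of_le' tendsto_const_nhds hmarkov
    (.of_forall fun _ => zero_le) ?_
  filter_upwards [eventually_gt_atTop 0] with r hr
  refine iSup₂_le fun μ (hμ : ∫⁻ x, ‖x‖ₑ ∂μ ≤ C) => ?_
  calc μ {x | r < ‖x‖} ≤ μ {x | ENNReal.ofReal r ≤ ‖x‖ₑ} :=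
        measure_mono fun x hx => by
          rw [Set.mem_ofPred_eq, ← ofReal_norm]
          exact ENNReal.ofReal_le_ofReal (le_of_lt hx)
    _ ≤ (∫⁻ x, ‖x‖ₑ ∂μ) / ENNReal.ofReal r :=
        meas_ge_le_lintegral_div (by fun_prop) (by simpa using hr) ENNReal.ofReal_ne_top
    _ ≤ C / ENNReal.ofReal r := by gcongr

theorem isCompact_firstMomentSublevel [BorelSpace E] [ProperSpace E] {C : ℝ≥0∞} (hC : C ≠ ∞) :
    IsCompact (firstMomentSublevel (E := E) C) := by
  have htight : IsTightMeasureSet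
      {(ρ : Measure E) | ρ ∈ firstMomentSublevel (E := E) C} :=
    (isTightMeasureSet_setOf_lintegral_enorm_le hC).subset <| by rintro _ ⟨ρ, hρ, rfl⟩; exact hρ
  simpa [(isClosed_firstMomentSublevel C).closure_eq] using
    isCompact_closure_of_isTightMeasureSet htight

theorem integrable_norm_of_mem_firstMomentSublevel [OpensMeasurableSpace E] {C : ℝ≥0∞}
    (hC : C ≠ ∞) {ρ : ProbabilityMeasure E} (hρ : ρ ∈ firstMomentSublevel C) :
    Integrable (fun x => ‖x‖) (ρ : Measure E) :=
  ⟨by fun_prop, by simpa [HasFiniteIntegral] using hρ.trans_lt hC.lt_top⟩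

theorem mem_firstMomentSublevel_ofReal {ρ : ProbabilityMeasure E}
    (hρ : Integrable (fun x => ‖x‖) (ρ : Measure E)) {R : ℝ}
    (hR : ∫ x, ‖x‖ ∂(ρ : Measure E) ≤ R) : ρ ∈ firstMomentSublevel (ENNReal.ofReal R) := by
  change ∫⁻ x, ‖x‖ₑ ∂(ρ : Measure E) ≤ _
  simp_rw [← ofReal_norm]
  rw [← ofReal_integral_eq_lintegral_ofReal hρ (.of_forall fun _ => norm_nonneg _)]
  exact ENNReal.ofReal_le_ofReal hR

end FirstMoment

theorem stmt13_general {n : ℕ}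
    (Φ : {μ : ProbabilityMeasure (EuclideanSpace ℝ (Fin n)) //
      Integrable (fun u => ‖u‖) (μ : Measure (EuclideanSpace ℝ (Fin n)))} → ℝ)
    (hnonpos : ∀ μ, Φ μ ≤ 0)
    (c₁ c₂ : ℝ) (hc₂ : 0 < c₂)
    (hbound : ∀ μ, Φ μ ≤ c₁ - c₂ * ∫ u, ‖u‖ ∂(μ.1 : Measure (EuclideanSpace ℝ (Fin n))))
    (husc : UpperSemicontinuous Φ)
    {ι : Type*} [Preorder ι] [Nonempty ι] (hdir : IsDirected ι (· ≤ ·))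
    (μ : ι → {μ : ProbabilityMeasure (EuclideanSpace ℝ (Fin n)) //
      Integrable (fun u => ‖u‖) (μ : Measure (EuclideanSpace ℝ (Fin n)))})
    (hlim : Filter.Tendsto (fun l => Φ (μ l)) Filter.atTop (nhds 0)) :
    (∃ ν : ProbabilityMeasure (EuclideanSpace ℝ (Fin n)),
      MapClusterPt ν Filter.atTop (fun l => (μ l).1)) ∧
    ∀ ν : ProbabilityMeasure (EuclideanSpace ℝ (Fin n)),
      MapClusterPt ν Filter.atTop (fun l => (μ l).1) →
      ∃ h : Integrable (fun u => ‖u‖) (ν : Measure (EuclideanSpace ℝ (Fin n))),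
        Φ ⟨ν, h⟩ = 0 := by
  have : (atTop : Filter ι).NeBot := atTop_neBot_iff.2 ⟨‹_›, hdir⟩
  set K := firstMomentSublevel (E := EuclideanSpace ℝ (Fin n)) (ENNReal.ofReal ((c₁ + 1) / c₂))
  have hev : ∀ᶠ l in atTop, (μ l).1 ∈ K := by
    filter_upwards [hlim.eventually (eventually_gt_nhds neg_one_lt_zero)] with l hl
    refine mem_firstMomentSublevel_ofReal (μ l).2 ((le_div_iff₀ hc₂).2 ?_)
    linarith [hbound (μ l)]
  refine ⟨(isCompact_firstMomentSublevel ENNReal.ofReal_ne_top).exists_mapClusterPt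
    (le_principal_iff.2 hev) |>.imp fun _ => And.right, fun ν hν => ?_⟩
  have hνK : ν ∈ K := (isClosed_firstMomentSublevel _).mem_of_mapClusterPt hν hev
  refine ⟨integrable_norm_of_mem_firstMomentSublevel ENNReal.ofReal_ne_top hνK, ?_⟩
  exact le_antisymm (hnonpos _)
    (UpperSemicontinuousAt.le_of_mapClusterPt (husc _)
      (Topology.IsInducing.subtypeVal.mapClusterPt_iff.1 hν) hlim)

/-- Let `Φ` be a nonpositive upper semicontinuous functional on the space
`ℰ` of probability measures on `ℝⁿ` with finite first moment, satisfying
`Φ(μ) ≤ c₁ - c₂ ∫‖u‖dμ` with `c₁ ≥ 0`, `c₂ > 0`. If `(μ_l)` is a net in `ℰ` with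
`Φ(μ_l) → 0`, then `(μ_l)` has a cluster point in the space of probability measures,
and every cluster point has finite first moment and satisfies `Φ(μ) = 0`. -/
theorem stmt13 {n : ℕ}
    (Φ : {μ : ProbabilityMeasure (EuclideanSpace ℝ (Fin n)) //
      Integrable (fun u => ‖u‖) (μ : Measure (EuclideanSpace ℝ (Fin n)))} → ℝ)
    (hnonpos : ∀ μ, Φ μ ≤ 0)
    (c₁ c₂ : ℝ) (hc₁ : 0 ≤ c₁) (hc₂ : 0 < c₂)
    (hbound : ∀ μ, Φ μ ≤ c₁ - c₂ * ∫ u, ‖u‖ ∂(μ.1 : Measure (EuclideanSpace ℝ (Fin n))))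
    (husc : UpperSemicontinuous Φ)
    {ι : Type*} [Preorder ι] [Nonempty ι] (hdir : IsDirected ι (· ≤ ·))
    (μ : ι → {μ : ProbabilityMeasure (EuclideanSpace ℝ (Fin n)) //
      Integrable (fun u => ‖u‖) (μ : Measure (EuclideanSpace ℝ (Fin n)))})
    (hlim : Filter.Tendsto (fun l => Φ (μ l)) Filter.atTop (nhds 0)) :
    (∃ ν : ProbabilityMeasure (EuclideanSpace ℝ (Fin n)),
      MapClusterPt ν Filter.atTop (fun l => (μ l).1)) ∧
    ∀ ν : ProbabilityMeasure (EuclideanSpace ℝ (Fin n)),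
      MapClusterPt ν Filter.atTop (fun l => (μ l).1) →
      ∃ h : Integrable (fun u => ‖u‖) (ν : Measure (EuclideanSpace ℝ (Fin n))),
        Φ ⟨ν, h⟩ = 0 :=
  stmt13_general Φ hnonpos c₁ c₂ hc₂ hbound husc hdir μ hlim
end

section
/- Let μ be a Borel probability measure on ℝⁿ with finite first moment, A ⊂ ℝⁿ a convex set with supp(μ) ⊆ A, and F a face of A. If the expected value E[μ] = ∫ u dμ(u) lies in F, then supp(μ) ⊆ F. -/
/-!
Let `b = ∫ x ∂μ`. If every segment of `A` ending at `b` can be prolonged a little beyond `b`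
inside `A`, then `b` lies in the interior of such a segment from any point of `A`, and the face
`F ∋ b` absorbs all of `A`. Otherwise `b` lies on the relative boundary of `A`, so a
supporting functional `g ≤ g b` on `A` exists that is not constant on `A`. Since
`∫ g dμ = g b`, the measure lives on the hyperplane `{g = g b}`, and we conclude by
induction on the dimension of `A`, replacing `A` and `F` by their sections with this hyperplane.
-/

open MeasureTheory Set Filter Topology

theorem IsExtreme.inter_inter {𝕜 E : Type*} [Semiring 𝕜] [PartialOrder 𝕜] [AddCommMonoid E]
    [SMul 𝕜 E] {A B : Set E} (h : IsExtreme 𝕜 A B) (C : Set E) :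
    IsExtreme 𝕜 (A ∩ C) (B ∩ C) :=
  ⟨inter_subset_inter_left C h.subset, fun _ hx _ hy _ hz hzxy ↦
    ⟨h.left_mem_of_mem_openSegment hx.1 hy.1 hz.1 hzxy, hx.2⟩⟩

theorem IsExtreme.mem_of_add_smul_sub_mem {E : Type*} [AddCommGroup E] [Module ℝ E]
    {A F : Set E} (hF : IsExtreme ℝ A F) {b x : E} (hb : b ∈ F) (hx : x ∈ A) {ε : ℝ}
    (hε : 0 < ε) (hy : b + ε • (b - x) ∈ A) : x ∈ F := by
  refine hF.left_mem_of_mem_openSegment hx hy hb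
    (mem_openSegment_iff_div.2 ⟨ε, 1, hε, one_pos, ?_⟩)
  have : ε + 1 ≠ 0 := by positivity
  match_scalars <;> field_simp <;> ring

theorem vectorSpan_inter_level_lt {k E : Type*} [Field k] [AddCommGroup E] [Module k E]
    (g : E →ₗ[k] k) {A : Set E} {p q : E} (hp : p ∈ A) (hq : q ∈ A) (hpq : g p ≠ g q) (c : k) :
    vectorSpan k (A ∩ {x | g x = c}) < vectorSpan k A := by
  refine lt_of_le_of_ne (vectorSpan_mono k inter_subset_left) fun h ↦ hpq ?_
  have hker : vectorSpan k (A ∩ {x | g x = c}) ≤ LinearMap.ker g := by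
    rw [vectorSpan_def, Submodule.span_le]
    rintro _ ⟨x, ⟨-, hx⟩, y, ⟨-, hy⟩, rfl⟩
    simp_all
  have hpq := LinearMap.mem_ker.1 (hker (h ▸ vsub_mem_vectorSpan k hp hq))
  rwa [vsub_eq_sub, map_sub, sub_eq_zero] at hpq

theorem Convex.exists_le_of_notMem_interior {E : Type*} [AddCommGroup E] [Module ℝ E]
    [TopologicalSpace E] [IsTopologicalAddGroup E] [ContinuousSMul ℝ E] [LocallyConvexSpace ℝ E]
    {S : Set E} (hS : Convex ℝ S) (hint : (interior S).Nonempty) {x : E} (hx : x ∉ interior S) :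
    ∃ f : StrongDual ℝ E, (∀ s ∈ S, f s ≤ f x) ∧ ∃ s ∈ S, f s < f x := by
  obtain ⟨f, hf⟩ := geometric_hahn_banach_open_point hS.interior isOpen_interior hx
  obtain ⟨s, hs⟩ := hint
  refine ⟨f, fun t ht ↦ ?_, s, interior_subset hs, hf s hs⟩
  have ht' := subset_closure ht
  rw [← hS.closure_interior_eq_closure_of_nonempty_interior ⟨s, hs⟩] at ht'
  exact closure_minimal (fun u hu ↦ (hf u hu).le) (isClosed_le f.continuous continuous_const) ht'

section FiniteDimensional

variable {E : Type*} [NormedAddCommGroup E] [NormedSpace ℝ E] [FiniteDimensional ℝ E]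

theorem Convex.exists_le_zero_of_neg_smul_notMem {T : Set E} (hT : Convex ℝ T) (h0 : 0 ∈ T)
    {x : E} (hx : x ∈ T) (hray : ∀ ε : ℝ, 0 < ε → -(ε • x) ∉ T) :
    ∃ g : StrongDual ℝ E, (∀ t ∈ T, g t ≤ 0) ∧ ∃ t ∈ T, g t < 0 := by
  -- Separate inside `span T`, where `T` has nonempty interior, then extend by Hahn–Banach.
  set V := Submodule.span ℝ T
  set S : Set V := (↑) ⁻¹' T
  have hS : Convex ℝ S := hT.linear_preimage V.subtype
  have hS0 : (0 : V) ∈ S := h0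
  have hint : (interior S).Nonempty := by
    rw [hS.interior_nonempty_iff_affineSpan_eq_top,
      AffineSubspace.affineSpan_eq_top_iff_vectorSpan_eq_top_of_nonempty ℝ ↥V ↥V ⟨0, hS0⟩,
      vectorSpan_eq_span_vsub_set_right ℝ hS0]
    simpa only [vsub_eq_sub, sub_zero, image_id'] using
      Submodule.span_span_coe_preimage (R := ℝ) (s := T)
  have h0int : (0 : V) ∉ interior S := by
    intro h
    set v : V := ⟨x, Submodule.subset_span hx⟩
    have hlim : Tendsto (fun ε : ℝ ↦ -(ε • v)) (𝓝[>] 0) (𝓝 0) := by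
      exact ((continuous_id.smul continuous_const).neg.tendsto' (0 : ℝ) 0 (by simp)).mono_left
        nhdsWithin_le_nhds
    obtain ⟨ε, hεS, hε⟩ :=
      ((hlim.eventually (mem_interior_iff_mem_nhds.1 h)).and self_mem_nhdsWithin).exists
    exact hray ε hε hεS
  obtain ⟨f, hf, s, hs, hfs⟩ := hS.exists_le_of_notMem_interior hint h0int
  obtain ⟨g, hg, -⟩ := exists_extension_norm_eq V f
  refine ⟨g, fun t ht ↦ ?_, s, hs, ?_⟩
  · exact (hg _).trans_le ((hf ⟨t, Submodule.subset_span ht⟩ ht).trans_eq f.map_zero)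
  · exact (hg _).trans_lt (hfs.trans_eq f.map_zero)

theorem Convex.exists_le_of_forall_add_smul_sub_notMem {A : Set E} (hA : Convex ℝ A) {b x : E}
    (hb : b ∈ A) (hx : x ∈ A) (hray : ∀ ε : ℝ, 0 < ε → b + ε • (b - x) ∉ A) :
    ∃ g : StrongDual ℝ E, (∀ a ∈ A, g a ≤ g b) ∧ ∃ a ∈ A, g a < g b := by
  obtain ⟨g, hg, t, ht, hgt⟩ := (hA.translate_preimage_right b).exists_le_zero_of_neg_smul_notMem
    (x := x - b) (by simpa) (by simpa) fun ε hε ↦ by simpa [smul_sub] using hray ε hε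
  refine ⟨g, fun a ha ↦ ?_, b + t, ht, by simpa using hgt⟩
  simpa using hg (a - b) (by simpa)

end FiniteDimensional

theorem MeasureTheory.Measure.support_subset_of_ae_le_of_integral_eq {X : Type*}
    [TopologicalSpace X] [MeasurableSpace X] {μ : Measure X} [IsProbabilityMeasure μ] {f : X → ℝ}
    (hf : Continuous f) (hfi : Integrable f μ) {c : ℝ} (hle : ∀ᵐ x ∂μ, f x ≤ c)
    (hint : ∫ x, f x ∂μ = c) : μ.support ⊆ {x | f x = c} := by
  have hzero : ∀ᵐ x ∂μ, c - f x = 0 := by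
    refine (integral_eq_zero_iff_of_nonneg_ae (hle.mono fun x hx ↦ sub_nonneg.2 hx)
      ((integrable_const c).sub hfi)).1 ?_
    simp [integral_sub (integrable_const c) hfi, hint]
  exact μ.support_subset_of_isClosed (isClosed_eq hf continuous_const)
    (hzero.mono fun x hx ↦ (sub_eq_zero.1 hx).symm)

theorem MeasureTheory.Measure.support_subset_of_integral_mem_isExtreme {E : Type*}
    [NormedAddCommGroup E] [NormedSpace ℝ E] [FiniteDimensional ℝ E] [MeasurableSpace E]
    (μ : Measure E) [IsProbabilityMeasure μ] (hμ : Integrable (fun x ↦ x) μ) {A F : Set E}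
    (hA : Convex ℝ A) (hsupp : μ.support ⊆ A) (hF : IsExtreme ℝ A F) (hE : ∫ x, x ∂μ ∈ F) :
    μ.support ⊆ F := by
  induction hd : Module.finrank ℝ (vectorSpan ℝ A) using Nat.strong_induction_on
    generalizing A F with
  | _ d ih =>
    set b := ∫ x, x ∂μ
    by_cases hcore : ∀ x ∈ A, ∃ ε : ℝ, 0 < ε ∧ b + ε • (b - x) ∈ A
    · intro x hx
      obtain ⟨ε, hε, hy⟩ := hcore x (hsupp hx)
      exact hF.mem_of_add_smul_sub_mem hE (hsupp hx) hε hy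
    push Not at hcore
    obtain ⟨x₀, hx₀, hray⟩ := hcore
    obtain ⟨g, hg, a, ha, hga⟩ := hA.exists_le_of_forall_add_smul_sub_notMem (hF.subset hE) hx₀ hray
    have hsuppH : μ.support ⊆ {x | g x = g b} :=
      μ.support_subset_of_ae_le_of_integral_eq g.continuous (g.integrable_comp hμ)
        (mem_of_superset μ.support_mem_ae fun x hx ↦ hg x (hsupp hx)) (g.integral_comp_comm hμ)
    have hdim : Module.finrank ℝ (vectorSpan ℝ (A ∩ {x | g x = g b})) < d :=
      hd ▸ Submodule.finrank_lt_finrank_of_lt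
        (vectorSpan_inter_level_lt g.toLinearMap ha (hF.subset hE) hga.ne _)
    exact fun x hx ↦ (ih _ hdim (hA.inter (convex_hyperplane g.isLinear _))
      (subset_inter hsupp hsuppH) (hF.inter_inter _) ⟨hE, rfl⟩ rfl hx).1

theorem stmt18_general {n : ℕ} (μ : Measure (EuclideanSpace ℝ (Fin n)))
    [IsProbabilityMeasure μ]
    (hμ : Integrable (fun u => ‖u‖) μ)
    (A F : Set (EuclideanSpace ℝ (Fin n)))
    (hA : Convex ℝ A)
    (hsupp : {x : EuclideanSpace ℝ (Fin n) |
      ∀ U : Set (EuclideanSpace ℝ (Fin n)), IsOpen U → x ∈ U → 0 < μ U} ⊆ A)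
    (hFface : IsExtreme ℝ A F)
    (hE : (∫ u, u ∂μ) ∈ F) :
    {x : EuclideanSpace ℝ (Fin n) |
      ∀ U : Set (EuclideanSpace ℝ (Fin n)), IsOpen U → x ∈ U → 0 < μ U} ⊆ F := by
  have hsupport : {x : EuclideanSpace ℝ (Fin n) |
      ∀ U : Set (EuclideanSpace ℝ (Fin n)), IsOpen U → x ∈ U → 0 < μ U} = μ.support := by
    rw [Measure.support_eq_forall_isOpen]
    exact ext fun _ ↦ forall_congr' fun _ ↦ forall_comm
  rw [hsupport] at hsupp ⊢
  exact μ.support_subset_of_integral_mem_isExtreme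
    ((integrable_norm_iff aestronglyMeasurable_id).1 hμ) hA hsupp hFface hE

/-- Let `μ` be a Borel probability measure on `ℝⁿ` with finite first
moment, `A` a convex set containing `supp(μ)`, and `F` a (μ-measurable) face of `A`.
If the expected value `E[μ] = ∫ u dμ(u)` lies in `F`, then `supp(μ) ⊆ F`. The support
of `μ` is the set of points all of whose neighborhoods have positive measure. -/
theorem stmt18 {n : ℕ} (μ : Measure (EuclideanSpace ℝ (Fin n)))
    [IsProbabilityMeasure μ]
    (hμ : Integrable (fun u => ‖u‖) μ)
    (A F : Set (EuclideanSpace ℝ (Fin n)))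
    (hA : Convex ℝ A)
    (hsupp : {x : EuclideanSpace ℝ (Fin n) |
      ∀ U : Set (EuclideanSpace ℝ (Fin n)), IsOpen U → x ∈ U → 0 < μ U} ⊆ A)
    (hFface : IsExtreme ℝ A F) (hFconv : Convex ℝ F) (hFne : F.Nonempty)
    (hFmeas : MeasurableSet F)
    (hE : (∫ u, u ∂μ) ∈ F) :
    {x : EuclideanSpace ℝ (Fin n) |
      ∀ U : Set (EuclideanSpace ℝ (Fin n)), IsOpen U → x ∈ U → 0 < μ U} ⊆ F :=
  stmt18_general μ hμ A F hA hsupp hFface hE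
end
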